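/- arXiv:2512.03629 — 6 statements merged into one kernel-verified Lean document; each statement's English description precedes it below -/
import Mathlib

section
/- Let G be a finite simple graph containing an edge {v1, v2}, and let G' be the graph obtained from G by deleting the edge {v1, v2} (on the same vertex set). If s ≤ 0 or s ≥ 1, then the largest eigenvalue of M_{G'}(s) is at most the largest eigenvalue of M_G(s), i.e. λ_max(M_{G'}(s)) ≤ λ_max(M_G(s)). -/
open scoped Classical
open Matrix Polynomial

/-- The deformed Laplacian matrix `M_G(s) = I - s·A(G) + s²·(D(G) - I)` of a finite
simple graph `G`. -/
noncomputable def deformedLap {V : Type*} [Fintype V] (G : SimpleGraph V) (s : ℝ) :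
    Matrix V V ℝ :=
  1 - s • G.adjMatrix ℝ + s ^ 2 • (Matrix.diagonal (fun v => (G.degree v : ℝ)) - 1)

/-- The largest (real) eigenvalue of a matrix: the supremum of its real spectrum.
For a real symmetric matrix this is the maximal eigenvalue (the paper's `ρ`). -/
noncomputable def lamMax {n : Type*} [Fintype n] (M : Matrix n n ℝ) : ℝ :=
  sSup (spectrum ℝ M)

/-!
Up to the term `(1 - s²)‖x‖²`, the quadratic form `xᵀ M_G(s) x` is a sum over the edges `ij` of
`s²(x_i² + x_j²) - 2s x_i x_j`, the form of the block `[[s², -s], [-s, s²]]`. For `s ≥ 1` every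
such term is nonnegative, so removing edges can only lower the quadratic form, hence the largest
eigenvalue. For `s ≤ 0` the terms are nonnegative once `x` is replaced by `|x|`, which has the same
norm and, the off-diagonal entries `-s` being nonnegative, no smaller quadratic form; so a top
eigenvector `x` of the smaller graph is beaten by the test vector `|x|` for the larger one.
-/

section Spectral

variable {n : Type*} [Fintype n]

open scoped MatrixOrder in
lemma Matrix.IsHermitian.dotProduct_mulVec_le_lamMax_mul {A : Matrix n n ℝ} (hA : A.IsHermitian)
    (x : n → ℝ) : x ⬝ᵥ (A *ᵥ x) ≤ lamMax A * (x ⬝ᵥ x) := by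
  have hle : A ≤ algebraMap ℝ _ (lamMax A) :=
    le_algebraMap_of_spectrum_le (fun r hr => le_csSup A.finite_spectrum.bddAbove hr)
      hA.isSelfAdjoint
  have := (Matrix.le_iff.mp hle).dotProduct_mulVec_nonneg x
  simpa [sub_mulVec, Algebra.algebraMap_eq_smul_one, smul_mulVec, dotProduct_sub] using this

lemma lamMax_mem_spectrum [Nonempty n] {A : Matrix n n ℝ} (hA : A.IsHermitian) :
    lamMax A ∈ spectrum ℝ A :=
  have hne : (spectrum ℝ A).Nonempty := by
    rw [hA.spectrum_real_eq_range_eigenvalues]; exact Set.range_nonempty _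
  hne.csSup_mem A.finite_spectrum

lemma exists_mulVec_eq_lamMax_smul [Nonempty n] {A : Matrix n n ℝ} (hA : A.IsHermitian) :
    ∃ v : n → ℝ, v ≠ 0 ∧ A *ᵥ v = lamMax A • v := by
  have hμ : Module.End.HasEigenvalue A.toLin' (lamMax A) :=
    .of_mem_spectrum (by rw [spectrum_toLin']; exact lamMax_mem_spectrum hA)
  obtain ⟨v, hv⟩ := hμ.exists_hasEigenvector
  exact ⟨v, hv.2, by simpa using hv.apply_eq_smul⟩

lemma lamMax_le_lamMax_of_forall_exists_le {A B : Matrix n n ℝ} (hA : A.IsHermitian)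
    (hB : B.IsHermitian)
    (h : ∀ x : n → ℝ, ∃ y : n → ℝ, y ⬝ᵥ y = x ⬝ᵥ x ∧ x ⬝ᵥ (B *ᵥ x) ≤ y ⬝ᵥ (A *ᵥ y)) :
    lamMax B ≤ lamMax A := by
  cases isEmpty_or_nonempty n
  · simp [lamMax]
  obtain ⟨v, hv0, hv⟩ := exists_mulVec_eq_lamMax_smul hB
  obtain ⟨y, hyv, hle⟩ := h v
  have hpos : 0 < v ⬝ᵥ v :=
    (Finset.sum_nonneg fun i _ => mul_self_nonneg (v i)).lt_of_ne'
      (dotProduct_self_eq_zero.not.mpr hv0)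
  have : lamMax B * (v ⬝ᵥ v) ≤ lamMax A * (v ⬝ᵥ v) :=
    calc lamMax B * (v ⬝ᵥ v) = v ⬝ᵥ (B *ᵥ v) := by rw [hv, dotProduct_smul, smul_eq_mul]
      _ ≤ y ⬝ᵥ (A *ᵥ y) := hle
      _ ≤ lamMax A * (v ⬝ᵥ v) := hyv ▸ hA.dotProduct_mulVec_le_lamMax_mul y
  exact le_of_mul_le_mul_right this hpos

end Spectral

section DeformedLaplacian

variable {V : Type*} [Fintype V]

lemma deformedLap_eq (G : SimpleGraph V) (s : ℝ) :
    deformedLap G s = (1 - s ^ 2) • 1 + s ^ 2 • G.lapMatrix ℝ + (s ^ 2 - s) • G.adjMatrix ℝ := by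
  rw [deformedLap, SimpleGraph.lapMatrix, SimpleGraph.degMatrix]
  module

lemma deformedLap_isHermitian (G : SimpleGraph V) (s : ℝ) : (deformedLap G s).IsHermitian := by
  rw [deformedLap_eq]
  exact ((isHermitian_one.smul (.all _)).add ((G.isHermitian_lapMatrix ℝ).smul (.all _))).add
    ((G.isHermitian_adjMatrix ℝ).smul (.all _))

def deformedEdgeForm (s a b : ℝ) : ℝ := s ^ 2 * (a ^ 2 + b ^ 2) - 2 * s * (a * b)

lemma two_mul_dotProduct_deformedLap_mulVec (G : SimpleGraph V) (s : ℝ) (x : V → ℝ) :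
    2 * (x ⬝ᵥ (deformedLap G s *ᵥ x)) = 2 * (1 - s ^ 2) * (x ⬝ᵥ x) +
      ∑ i, ∑ j, if G.Adj i j then deformedEdgeForm s (x i) (x j) else 0 := by
  have hlap := G.lapMatrix_toLinearMap₂' ℝ x
  rw [toLinearMap₂'_apply'] at hlap
  have hedges : (∑ i, ∑ j, if G.Adj i j then deformedEdgeForm s (x i) (x j) else 0) =
      s ^ 2 * (∑ i, ∑ j, if G.Adj i j then (x i - x j) ^ 2 else 0) +
        2 * (s ^ 2 - s) * ∑ i, ∑ j, if G.Adj i j then x i * x j else 0 := by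
    simp only [Finset.mul_sum, ← Finset.sum_add_distrib]
    congr! 2 with i - j -
    split_ifs
    · rw [deformedEdgeForm]; ring
    · ring
  simp only [deformedLap_eq, add_mulVec, smul_mulVec, one_mulVec, dotProduct_add,
    dotProduct_smul, smul_eq_mul, hlap, G.dotProduct_mulVec_adjMatrix, hedges]
  ring

lemma deformedEdgeForm_nonneg {s : ℝ} (hs : 1 ≤ s) (a b : ℝ) : 0 ≤ deformedEdgeForm s a b := by
  have : deformedEdgeForm s a b = s * (s - 1) * (a ^ 2 + b ^ 2) + s * (a - b) ^ 2 := by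
    rw [deformedEdgeForm]; ring
  rw [this]
  have : 0 ≤ s - 1 := by linarith
  positivity

lemma deformedEdgeForm_abs_nonneg {s : ℝ} (hs : s ≤ 0) (a b : ℝ) :
    0 ≤ deformedEdgeForm s |a| |b| := by
  have : 0 ≤ -s * (|a| * |b|) := mul_nonneg (neg_nonneg.mpr hs) (by positivity)
  rw [deformedEdgeForm]
  nlinarith [sq_nonneg s]

lemma deformedEdgeForm_le_abs {s : ℝ} (hs : s ≤ 0) (a b : ℝ) :
    deformedEdgeForm s a b ≤ deformedEdgeForm s |a| |b| := by
  have : -s * (a * b) ≤ -s * (|a| * |b|) :=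
    mul_le_mul_of_nonneg_left ((le_abs_self _).trans (abs_mul a b).le) (neg_nonneg.mpr hs)
  simp only [deformedEdgeForm, sq_abs]
  linarith

lemma dotProduct_deformedLap_mulVec_le {H G : SimpleGraph V} (hHG : H ≤ G) {s : ℝ}
    {x y : V → ℝ} (hxy : x ⬝ᵥ x = y ⬝ᵥ y)
    (hH : ∀ i j, H.Adj i j → deformedEdgeForm s (x i) (x j) ≤ deformedEdgeForm s (y i) (y j))
    (hG : ∀ i j, G.Adj i j → 0 ≤ deformedEdgeForm s (y i) (y j)) :
    x ⬝ᵥ (deformedLap H s *ᵥ x) ≤ y ⬝ᵥ (deformedLap G s *ᵥ y) := by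
  suffices 2 * (x ⬝ᵥ (deformedLap H s *ᵥ x)) ≤ 2 * (y ⬝ᵥ (deformedLap G s *ᵥ y)) by linarith
  rw [two_mul_dotProduct_deformedLap_mulVec, two_mul_dotProduct_deformedLap_mulVec, hxy]
  gcongr with i _ j _
  split_ifs with hHij hGij hGij
  · exact hH i j hHij
  · exact absurd (hHG hHij) hGij
  · exact hG i j hGij
  · exact le_rfl

theorem lamMax_deformedLap_le_of_le {H G : SimpleGraph V} (hHG : H ≤ G) {s : ℝ}
    (hs : s ≤ 0 ∨ 1 ≤ s) : lamMax (deformedLap H s) ≤ lamMax (deformedLap G s) := by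
  refine lamMax_le_lamMax_of_forall_exists_le (deformedLap_isHermitian G s)
    (deformedLap_isHermitian H s) fun x => ?_
  rcases hs with hs | hs
  · refine ⟨fun v => |x v|, by simp [dotProduct], ?_⟩
    exact dotProduct_deformedLap_mulVec_le hHG (by simp [dotProduct])
      (fun _ _ _ => deformedEdgeForm_le_abs hs _ _)
      (fun _ _ _ => deformedEdgeForm_abs_nonneg hs _ _)
  · exact ⟨x, rfl, dotProduct_deformedLap_mulVec_le hHG rfl (fun _ _ _ => le_rfl)
      (fun _ _ _ => deformedEdgeForm_nonneg hs _ _)⟩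

end DeformedLaplacian

theorem stmt_1_general {V : Type*} [Fintype V] (G : SimpleGraph V) (v1 v2 : V)
    (s : ℝ) (hs : s ≤ 0 ∨ 1 ≤ s) :
    lamMax (deformedLap (G.deleteEdges ({s(v1, v2)} : Set (Sym2 V))) s)
      ≤ lamMax (deformedLap G s) :=
  lamMax_deformedLap_le_of_le (G.deleteEdges_le _) hs

/-- Deleting an edge does not increase the largest eigenvalue of the deformed
Laplacian when `s ≤ 0` or `s ≥ 1`. -/
theorem stmt_1 {V : Type*} [Fintype V] (G : SimpleGraph V) (v1 v2 : V)
    (h : G.Adj v1 v2) (s : ℝ) (hs : s ≤ 0 ∨ 1 ≤ s) :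
    lamMax (deformedLap (G.deleteEdges ({s(v1, v2)} : Set (Sym2 V))) s)
      ≤ lamMax (deformedLap G s) :=
  stmt_1_general G v1 v2 s hs
end

section
/- Let G be a finite simple graph on a vertex set V and let G' be a spanning subgraph of G (a simple graph on V with G'.Adj ≤ G.Adj). If s ≤ 0 or s ≥ 1, then λ_max(M_{G'}(s)) ≤ λ_max(M_G(s)). -/
/-!
The quadratic form of `M_G(s)` is `(1 - s²)‖x‖² + ∑_{uv ∈ E(G)} (s²(x_u² + x_v²) - 2s x_u x_v)`.
For `s ≥ 1` every edge term is nonnegative, because `2s x_u x_v ≤ s(x_u² + x_v²) ≤ s²(x_u² + x_v²)`,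
so deleting edges can only decrease the form, and `λ_max` is the maximum of the Rayleigh quotient.
For `s ≤ 0` the edge terms are nonnegative only on nonnegative vectors; but the off-diagonal entries
of `M_{G'}(s)` are then nonnegative, so replacing `x` by `|x|` does not decrease its form.
-/

open scoped Classical
open Matrix Polynomial

namespace Matrix

variable {n : Type*} [Fintype n]

open scoped MatrixOrder in
theorem IsHermitian.forall_spectrum_le_iff {A : Matrix n n ℝ} (hA : A.IsHermitian) (c : ℝ) :
    (∀ μ ∈ spectrum ℝ A, μ ≤ c) ↔ ∀ x, x ⬝ᵥ A *ᵥ x ≤ c * (x ⬝ᵥ x) := by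
  rw [← le_algebraMap_iff_spectrum_le hA, le_iff, Algebra.algebraMap_eq_smul_one,
    posSemidef_iff_dotProduct_mulVec, and_iff_right ((isHermitian_one.smul (.all c)).sub hA)]
  simp only [star_trivial, sub_mulVec, dotProduct_sub, sub_nonneg, smul_mulVec, one_mulVec,
    dotProduct_smul, smul_eq_mul]

theorem IsHermitian.lamMax_le_iff [Nonempty n] {A : Matrix n n ℝ} (hA : A.IsHermitian) (c : ℝ) :
    lamMax A ≤ c ↔ ∀ x, x ⬝ᵥ A *ᵥ x ≤ c * (x ⬝ᵥ x) := by
  rw [lamMax, csSup_le_iff (finite_spectrum A).bddAbove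
    ⟨_, hA.eigenvalues_mem_spectrum_real (Classical.arbitrary n)⟩, hA.forall_spectrum_le_iff]

theorem dotProduct_mulVec_le_abs {M : Matrix n n ℝ} (hM : ∀ i j, i ≠ j → 0 ≤ M i j)
    (x : n → ℝ) : x ⬝ᵥ M *ᵥ x ≤ |x| ⬝ᵥ M *ᵥ |x| := by
  simp only [dotProduct, mulVec, Finset.mul_sum, Pi.abs_apply]
  refine Finset.sum_le_sum fun i _ ↦ Finset.sum_le_sum fun j _ ↦ ?_
  rw [mul_left_comm, mul_left_comm |x i|, ← abs_mul]
  rcases eq_or_ne i j with rfl | hij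
  · rw [abs_mul_self]
  · exact mul_le_mul_of_nonneg_left (le_abs_self _) (hM i j hij)

theorem abs_dotProduct_abs (x : n → ℝ) : |x| ⬝ᵥ |x| = x ⬝ᵥ x := by
  simp only [dotProduct, Pi.abs_apply, abs_mul_abs_self]

end Matrix

namespace SimpleGraph

variable {V : Type*} [Fintype V] (G : SimpleGraph V) (s : ℝ)

theorem deformedLap_eq :
    deformedLap G s =
      (1 - s ^ 2) • (1 : Matrix V V ℝ) + s ^ 2 • G.degMatrix ℝ - s • G.adjMatrix ℝ := by
  rw [deformedLap, degMatrix]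
  module

theorem isHermitian_deformedLap : (deformedLap G s).IsHermitian := by
  rw [deformedLap_eq]
  exact ((isHermitian_one.smul (.all _)).add ((G.isHermitian_degMatrix ℝ).smul (.all _))).sub
    ((G.isHermitian_adjMatrix ℝ).smul (.all _))

theorem deformedLap_apply_of_ne {u v : V} (h : u ≠ v) :
    deformedLap G s u v = if G.Adj u v then -s else 0 := by
  split_ifs <;> simp [deformedLap, adjMatrix_apply, *]

theorem dotProduct_deformedLap_mulVec (x : V → ℝ) :
    x ⬝ᵥ deformedLap G s *ᵥ x = (1 - s ^ 2) * (x ⬝ᵥ x) +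
      (∑ u, ∑ v, if G.Adj u v then s ^ 2 * (x u ^ 2 + x v ^ 2) - 2 * s * x u * x v else 0) / 2 := by
  have hswap : (∑ u, ∑ v, if G.Adj u v then s ^ 2 * x v ^ 2 - s * x v * x u else 0) =
      ∑ u, ∑ v, if G.Adj u v then s ^ 2 * x u ^ 2 - s * x u * x v else 0 := by
    rw [Finset.sum_comm]
    simp_rw [G.adj_comm]
  have hsplit :
      (∑ u, ∑ v, if G.Adj u v then s ^ 2 * (x u ^ 2 + x v ^ 2) - 2 * s * x u * x v else 0) =
        (∑ u, ∑ v, if G.Adj u v then s ^ 2 * x u ^ 2 - s * x u * x v else 0) +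
          ∑ u, ∑ v, if G.Adj u v then s ^ 2 * x v ^ 2 - s * x v * x u else 0 := by
    simp_rw [← Finset.sum_add_distrib, ite_add_ite, add_zero]
    congr! 3
    ring
  rw [hsplit, hswap, add_self_div_two, deformedLap_eq]
  simp only [add_mulVec, sub_mulVec, smul_mulVec, one_mulVec, dotProduct_add, dotProduct_sub,
    dotProduct_smul, smul_eq_mul, dotProduct_mulVec_degMatrix, dotProduct_mulVec_adjMatrix,
    degree_eq_sum_if_adj, Finset.mul_sum, Finset.sum_mul, add_sub_assoc, ← Finset.sum_sub_distrib]
  congr! 3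
  split_ifs <;> ring

variable {G s}

theorem dotProduct_deformedLap_mulVec_le_of_le {G' : SimpleGraph V} (hsub : G' ≤ G)
    {x : V → ℝ} (hx : ∀ u v, G.Adj u v → 2 * s * x u * x v ≤ s ^ 2 * (x u ^ 2 + x v ^ 2)) :
    x ⬝ᵥ deformedLap G' s *ᵥ x ≤ x ⬝ᵥ deformedLap G s *ᵥ x := by
  rw [dotProduct_deformedLap_mulVec, dotProduct_deformedLap_mulVec]
  gcongr with u _ v _
  split_ifs with h' h h
  exacts [le_rfl, absurd (hsub h') h, sub_nonneg.2 (hx u v h), le_rfl]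

end SimpleGraph

theorem two_mul_mul_le_sq_mul_add_sq_of_one_le {s : ℝ} (hs : 1 ≤ s) (a b : ℝ) :
    2 * s * a * b ≤ s ^ 2 * (a ^ 2 + b ^ 2) := by
  have h0 : 0 ≤ s := by linarith
  nlinarith [mul_nonneg h0 (sq_nonneg (a - b)),
    mul_nonneg (mul_nonneg h0 (sub_nonneg.2 hs)) (add_nonneg (sq_nonneg a) (sq_nonneg b))]

theorem two_mul_mul_le_sq_mul_add_sq_of_nonpos {s a b : ℝ} (hs : s ≤ 0) (ha : 0 ≤ a)
    (hb : 0 ≤ b) : 2 * s * a * b ≤ s ^ 2 * (a ^ 2 + b ^ 2) := by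
  nlinarith [mul_nonneg (mul_nonneg (neg_nonneg.2 hs) ha) hb,
    mul_nonneg (sq_nonneg s) (add_nonneg (sq_nonneg a) (sq_nonneg b))]

/-- For a spanning subgraph `G' ≤ G` and `s ≤ 0` or `s ≥ 1`, the largest eigenvalue
of the deformed Laplacian does not increase. -/
theorem stmt_2 {V : Type*} [Fintype V] (G G' : SimpleGraph V) (hsub : G' ≤ G)
    (s : ℝ) (hs : s ≤ 0 ∨ 1 ≤ s) :
    lamMax (deformedLap G' s) ≤ lamMax (deformedLap G s) := by
  cases isEmpty_or_nonempty V
  · exact (congrArg lamMax (Subsingleton.elim _ _)).le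
  have rayleigh := ((G.isHermitian_deformedLap s).lamMax_le_iff _).1 le_rfl
  rw [(G'.isHermitian_deformedLap s).lamMax_le_iff]
  intro x
  rcases hs with hs | hs
  · have off_diag_nonneg (u v : V) (huv : u ≠ v) : 0 ≤ deformedLap G' s u v := by
      rw [G'.deformedLap_apply_of_ne s huv]
      split_ifs <;> linarith
    calc x ⬝ᵥ deformedLap G' s *ᵥ x ≤ |x| ⬝ᵥ deformedLap G' s *ᵥ |x| :=
          dotProduct_mulVec_le_abs off_diag_nonneg x
      _ ≤ |x| ⬝ᵥ deformedLap G s *ᵥ |x| :=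
          SimpleGraph.dotProduct_deformedLap_mulVec_le_of_le hsub fun u v _ ↦
            two_mul_mul_le_sq_mul_add_sq_of_nonpos hs (abs_nonneg _) (abs_nonneg _)
      _ ≤ lamMax (deformedLap G s) * (x ⬝ᵥ x) := abs_dotProduct_abs x ▸ rayleigh |x|
  · exact (SimpleGraph.dotProduct_deformedLap_mulVec_le_of_le hsub fun u v _ ↦
      two_mul_mul_le_sq_mul_add_sq_of_one_le hs _ _).trans (rayleigh x)
end

section
/- Let G be a finite simple bipartite graph (i.e., its vertex set admits a partition into two parts with every edge joining the two parts; equivalently G is 2-colorable) and let s be a real number. Then M_G(s) and M_G(-s) are cospectral; equivalently, the characteristic polynomials satisfy charpoly(M_G(s)) = charpoly(M_G(-s)). -/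
open scoped Classical
open Matrix Polynomial

lemma conj_charpoly {n : Type*} [Fintype n] [DecidableEq n] (S M : Matrix n n ℝ)
    (hS : S * S = 1) : (S * M * S).charpoly = M.charpoly := by
  unfold Matrix.charpoly
  have hmapS : (C : ℝ →+* ℝ[X]).mapMatrix S * (C : ℝ →+* ℝ[X]).mapMatrix S = 1 := by
    rw [← _root_.map_mul, hS, _root_.map_one]
  have key : charmatrix (S * M * S)
      = (C : ℝ →+* ℝ[X]).mapMatrix S * charmatrix M * (C : ℝ →+* ℝ[X]).mapMatrix S := by
    unfold charmatrix
    rw [mul_sub, sub_mul, _root_.map_mul, _root_.map_mul]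
    congr 1
    rw [← Matrix.scalar_commute (X : ℝ[X]) (Commute.all _) _, mul_assoc, hmapS, mul_one]
  rw [key, Matrix.det_mul, Matrix.det_mul]
  have : ((C : ℝ →+* ℝ[X]).mapMatrix S).det * ((C : ℝ →+* ℝ[X]).mapMatrix S).det = 1 := by
    rw [← Matrix.det_mul, hmapS, Matrix.det_one]
  calc ((C : ℝ →+* ℝ[X]).mapMatrix S).det * (charmatrix M).det
        * ((C : ℝ →+* ℝ[X]).mapMatrix S).det
      = ((C : ℝ →+* ℝ[X]).mapMatrix S).det * ((C : ℝ →+* ℝ[X]).mapMatrix S).det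
        * (charmatrix M).det := by ring
    _ = (charmatrix M).det := by rw [this, one_mul]

/-- If `G` is bipartite (2-colorable), then `M_G(s)` and `M_G(-s)` are cospectral:
they have equal characteristic polynomials. -/
theorem stmt_5 {V : Type*} [Fintype V] (G : SimpleGraph V) (hbip : G.Colorable 2)
    (s : ℝ) :
    (deformedLap G s).charpoly = (deformedLap G (-s)).charpoly := by
  obtain ⟨c⟩ := hbip
  set d : V → ℝ := fun v => if c v = 0 then 1 else -1 with hd
  have hd2 : ∀ v, d v * d v = 1 := by
    intro v; by_cases h : c v = 0 <;> simp [hd, h]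
  set S : Matrix V V ℝ := Matrix.diagonal d with hSdef
  have hS : S * S = 1 := by
    rw [hSdef, Matrix.diagonal_mul_diagonal]
    ext i j
    by_cases h : i = j <;> simp [Matrix.diagonal, h, hd2, Matrix.one_apply]
  have key : S * deformedLap G s * S = deformedLap G (-s) := by
    ext i j
    have hentry : ∀ k l, (S * deformedLap G s * S) k l = d k * deformedLap G s k l * d l := by
      intro k l
      rw [hSdef, Matrix.mul_diagonal, Matrix.diagonal_mul]
    rw [hentry]
    by_cases h : i = j
    · subst h
      have : ∀ t : ℝ, deformedLap G t i i = 1 + t ^ 2 * ((G.degree i : ℝ) - 1) := by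
        intro t
        simp [deformedLap, Matrix.one_apply_eq, Matrix.diagonal]
      rw [this s, this (-s)]
      linear_combination (1 + s ^ 2 * ((G.degree i : ℝ) - 1)) * hd2 i
    · have hoff : ∀ t : ℝ, deformedLap G t i j = -(t * G.adjMatrix ℝ i j) := by
        intro t
        simp [deformedLap, Matrix.one_apply, h, Matrix.diagonal_apply_ne _ h]
      rw [hoff s, hoff (-s)]
      by_cases hadj : G.Adj i j
      · have hne : c i ≠ c j := c.valid hadj
        have hdd : d i * d j = -1 := by
          by_cases h0 : c i = 0 <;> by_cases h1 : c j = 0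
          · exact absurd (h0.trans h1.symm) hne
          · simp [hd, h0, h1]
          · simp [hd, h0, h1]
          · exfalso; apply hne; omega
        simp [SimpleGraph.adjMatrix_apply, hadj]
        linear_combination (-s) * hdd
      · simp [SimpleGraph.adjMatrix_apply, hadj]
  rw [← key, conj_charpoly _ _ hS]
end

section
/- Let T be a finite tree (a connected acyclic simple graph) on at least 2 vertices and let s be a real number. Then 0 is an eigenvalue of the deformed Laplacian M_T(s) (equivalently, det(M_T(s)) = 0) if and only if s = 1 or s = -1. -/
/-!
Root the tree at `r` and write `d = dist r`. Adjacent vertices differ in depth by exactly one,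
so for `s² = 1` the vector `v ↦ s ^ d v` lies in the kernel of `M_T(s)`. Conversely, let `x` be
in the kernel. At a vertex `v ≠ r` with parent `u` whose children `w` already satisfy
`x w = s * x v`, the kernel equation collapses to `x v = s * x u`; by induction from the leaves
this holds along every edge. The equation at the root then reads `(1 - s²) * x r = 0`, so for
`s² ≠ 1` we get `x r = 0` and hence `x = s ^ d * x r = 0`.
-/

open scoped Classical
open Matrix Polynomial

theorem Matrix.zero_mem_spectrum_iff_exists_mulVec_eq_zero {n K : Type*} [Fintype n]
    [DecidableEq n] [Field K] (M : Matrix n n K) :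
    0 ∈ spectrum K M ↔ ∃ x ≠ 0, M *ᵥ x = 0 := by
  rw [spectrum.zero_mem_iff, Matrix.isUnit_iff_isUnit_det, isUnit_iff_ne_zero, not_ne_iff,
    ← Matrix.exists_mulVec_eq_zero_iff]

namespace SimpleGraph

variable {V : Type*} {G : SimpleGraph V}

lemma IsTree.existsUnique_adj_dist_add_one (hG : G.IsTree) (r : V) {v : V} (hv : v ≠ r) :
    ∃! u, G.Adj v u ∧ G.dist r u + 1 = G.dist r v := by
  obtain ⟨p, hp, hlen⟩ := hG.connected.exists_path_of_dist r v
  have hadj := p.adj_penultimate (p.not_nil_of_ne hv.symm)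
  refine ⟨p.penultimate, ⟨hadj.symm, ?_⟩, ?_⟩
  · have := G.dist_le p.dropLast
    have := hG.dist_eq_dist_add_one_of_adj r hadj
    grind [Walk.length_dropLast]
  · rintro u ⟨hvu, hdu⟩
    obtain ⟨q, hq, hqlen⟩ := hG.connected.exists_path_of_dist r u
    refine hG.isAcyclic.eq_penultimate_of_adj_end hp hvu ?_
    by_contra hu
    have hvq := hG.isAcyclic.mem_support_of_ne_mem_support_of_adj_of_isPath hq hp hvu.symm hu
    have := G.dist_le (q.takeUntil v hvq)
    have := q.length_takeUntil_le_length hvq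
    omega

section LocallyFinite

variable [G.LocallyFinite]

variable (G) in
noncomputable def childFinset (r v : V) : Finset V :=
  {w ∈ G.neighborFinset v | G.dist r w = G.dist r v + 1}

lemma IsTree.childFinset_self (hG : G.IsTree) (r : V) :
    G.childFinset r r = G.neighborFinset r := by
  refine Finset.filter_true_of_mem fun w hw => ?_
  have := hG.dist_eq_dist_add_one_of_adj r ((mem_neighborFinset _ _ _).mp hw)
  rw [dist_self] at this ⊢
  omega

lemma IsTree.sum_neighborFinset_eq_add_sum_childFinset {M : Type*} [AddCommMonoid M]
    (hG : G.IsTree) {r v u : V} (hv : v ≠ r) (hvu : G.Adj v u)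
    (hdu : G.dist r u + 1 = G.dist r v) (f : V → M) :
    ∑ w ∈ G.neighborFinset v, f w = f u + ∑ w ∈ G.childFinset r v, f w := by
  have hparent : ∀ w, G.Adj v w ∧ G.dist r w + 1 = G.dist r v → w = u :=
    fun w hw => (hG.existsUnique_adj_dist_add_one r hv).unique hw ⟨hvu, hdu⟩
  have hnbhd : G.neighborFinset v = insert u (G.childFinset r v) := by
    ext w
    simp only [childFinset, Finset.mem_insert, Finset.mem_filter, mem_neighborFinset]
    constructor
    · intro hvw
      rcases hG.dist_eq_dist_add_one_of_adj r hvw with h | h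
      · exact .inl (hparent w ⟨hvw, h.symm⟩)
      · exact .inr ⟨hvw, h⟩
    · rintro (rfl | ⟨hvw, -⟩) <;> assumption
  have hu : u ∉ G.childFinset r v := fun hu => by
    rw [childFinset, Finset.mem_filter] at hu
    omega
  rw [hnbhd, Finset.sum_insert hu]

end LocallyFinite

section Fintype

variable [Fintype V]

theorem deformedLap_mulVec_apply (G : SimpleGraph V) (s : ℝ) (x : V → ℝ) (v : V) :
    (deformedLap G s *ᵥ x) v
      = x v - s * ∑ u ∈ G.neighborFinset v, x u + s ^ 2 * ((G.degree v : ℝ) - 1) * x v := by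
  simp only [deformedLap, add_mulVec, sub_mulVec, smul_mulVec, one_mulVec,
    adjMatrix_mulVec_apply, Pi.add_apply, Pi.sub_apply, Pi.smul_apply, smul_eq_mul,
    mulVec_diagonal]
  ring

variable {T : SimpleGraph V} {s : ℝ} {x : V → ℝ}

theorem IsTree.deformedLap_mulVec_pow_dist (hT : T.IsTree) (hs : s ^ 2 = 1) (r : V) :
    deformedLap T s *ᵥ (fun v => s ^ T.dist r v) = 0 := by
  funext v
  have hnbr : ∀ w ∈ T.neighborFinset v, s ^ T.dist r w = s * s ^ T.dist r v := by
    intro w hw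
    rcases hT.dist_eq_dist_add_one_of_adj r ((mem_neighborFinset _ _ _).mp hw) with h | h
    · rw [h, pow_succ]; linear_combination (-s ^ T.dist r w) * hs
    · rw [h, pow_succ, mul_comm]
  rw [deformedLap_mulVec_apply, Finset.sum_congr rfl hnbr, Finset.sum_const,
    card_neighborFinset_eq_degree, nsmul_eq_mul, Pi.zero_apply]
  linear_combination (-s ^ T.dist r v) * hs

theorem IsTree.apply_eq_mul_apply_of_deformedLap_mulVec_eq_zero (hT : T.IsTree)
    (hx : deformedLap T s *ᵥ x = 0) (r : V) :
    ∀ v u, T.Adj v u → T.dist r u + 1 = T.dist r v → x v = s * x u := by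
  obtain ⟨N, hN⟩ : ∃ N, ∀ w, T.dist r w ≤ N :=
    ⟨_, fun w => Finset.le_sup (Finset.mem_univ w)⟩
  intro v
  induction v using (measure fun v => N - T.dist r v).wf.induction with
  | h v ih =>
  intro u hvu hdu
  have hv : v ≠ r := by rintro rfl; simp at hdu
  have hchild : ∀ w ∈ T.childFinset r v, x w = s * x v := by
    intro w hw
    simp only [childFinset, Finset.mem_filter, mem_neighborFinset] at hw
    exact ih w (show N - _ < N - _ by have := hN w; omega) v hw.1.symm hw.2.symm
  have hdeg : (T.degree v : ℝ) = 1 + (T.childFinset r v).card := by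
    rw [← card_neighborFinset_eq_degree, Finset.card_eq_sum_ones, Finset.card_eq_sum_ones,
      hT.sum_neighborFinset_eq_add_sum_childFinset hv hvu hdu]
    push_cast; ring
  have hxv := congrFun hx v
  rw [deformedLap_mulVec_apply, hT.sum_neighborFinset_eq_add_sum_childFinset hv hvu hdu,
    Finset.sum_congr rfl hchild, Finset.sum_const, nsmul_eq_mul, hdeg, Pi.zero_apply] at hxv
  linear_combination hxv

theorem IsTree.eq_zero_of_deformedLap_mulVec_eq_zero (hT : T.IsTree) (hs : s ^ 2 ≠ 1)
    (hx : deformedLap T s *ᵥ x = 0) : x = 0 := by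
  obtain ⟨r⟩ := hT.connected.nonempty
  have hparent := hT.apply_eq_mul_apply_of_deformedLap_mulVec_eq_zero hx r
  have hroot : x r = 0 := by
    have hchild : ∀ w ∈ T.neighborFinset r, x w = s * x r := by
      intro w hw
      rw [← hT.childFinset_self r, childFinset, Finset.mem_filter, mem_neighborFinset] at hw
      exact hparent w r hw.1.symm hw.2.symm
    have hxr := congrFun hx r
    rw [deformedLap_mulVec_apply, Finset.sum_congr rfl hchild, Finset.sum_const,
      card_neighborFinset_eq_degree, nsmul_eq_mul, Pi.zero_apply] at hxr
    have : (1 - s ^ 2) * x r = 0 := by linear_combination hxr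
    exact (mul_eq_zero.mp this).resolve_left (sub_ne_zero.mpr (Ne.symm hs))
  ext v
  rw [Pi.zero_apply]
  induction hd : T.dist r v generalizing v with
  | zero => rw [← hT.connected.dist_eq_zero_iff.mp hd, hroot]
  | succ n ih =>
    have hv : v ≠ r := by rintro rfl; simp at hd
    obtain ⟨u, ⟨hvu, hdu⟩, -⟩ := hT.existsUnique_adj_dist_add_one r hv
    rw [hparent v u hvu hdu, ih u (by omega), mul_zero]

end Fintype

end SimpleGraph

theorem stmt_6_general {V : Type*} [Fintype V] (T : SimpleGraph V) (hT : T.IsTree)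
    (s : ℝ) :
    0 ∈ spectrum ℝ (deformedLap T s) ↔ s = 1 ∨ s = -1 := by
  rw [zero_mem_spectrum_iff_exists_mulVec_eq_zero, ← sq_eq_one_iff]
  constructor
  · rintro ⟨x, hx0, hx⟩
    by_contra hs
    exact hx0 (hT.eq_zero_of_deformedLap_mulVec_eq_zero hs hx)
  · intro hs
    obtain ⟨r⟩ := hT.connected.nonempty
    refine ⟨fun v => s ^ T.dist r v, fun h => ?_, hT.deformedLap_mulVec_pow_dist hs r⟩
    simpa using congrFun h r

/-- For a tree `T` on at least two vertices, `0` is an eigenvalue of `M_T(s)`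
if and only if `s = 1` or `s = -1`. -/
theorem stmt_6 {V : Type*} [Fintype V] (T : SimpleGraph V) (hT : T.IsTree)
    (hn : 2 ≤ Fintype.card V) (s : ℝ) :
    0 ∈ spectrum ℝ (deformedLap T s) ↔ s = 1 ∨ s = -1 :=
  stmt_6_general T hT s
end

section
/- Let T be a finite tree on at least 2 vertices and let s be a real number. Then the deformed Laplacian M_T(s) is positive definite if and only if |s| < 1. -/
open scoped Classical
open Matrix Polynomial

/-!
Root the tree at `r` and let `p v` be the neighbour of `v ≠ r` on its path to `r`. The edges of
a tree are exactly the pairs `{v, p v}` with `v ≠ r`, so the quadratic form of `M_T(s)`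
regroups as `(1 - s²) x_r² + ∑_{v ≠ r} (x_v - s x_{p v})²`. For `|s| < 1` this vanishes only if
`x_r = 0` and `x_v = s x_{p v}` for all `v ≠ r`, which forces `x = 0`. Conversely the vector
`x_v = s ^ depth v` kills every square and has value `1 - s²`.
-/

open Finset

namespace SimpleGraph.IsTree

open Walk

variable {V : Type*} {G : SimpleGraph V} (hG : G.IsTree) (r : V)

noncomputable def pathTo (v : V) : G.Walk v r :=
  (hG.existsUnique_path v r).exists.choose

lemma isPath_pathTo (v : V) : (hG.pathTo r v).IsPath :=
  (hG.existsUnique_path v r).exists.choose_spec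

lemma eq_pathTo {v : V} {p : G.Walk v r} (hp : p.IsPath) : p = hG.pathTo r v :=
  (hG.existsUnique_path v r).unique hp (hG.isPath_pathTo r v)

noncomputable def parent (v : V) : V :=
  (hG.pathTo r v).getVert 1

noncomputable def depth (v : V) : ℕ :=
  (hG.pathTo r v).length

lemma pathTo_root : hG.pathTo r r = .nil :=
  (hG.eq_pathTo r .nil).symm

lemma parent_root : hG.parent r r = r := by
  simp [parent, pathTo_root]

lemma depth_eq_zero_iff {v : V} : hG.depth r v = 0 ↔ v = r :=
  ⟨eq_of_length_eq_zero, by rintro rfl; simp [depth, pathTo_root]⟩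

lemma exists_pathTo_eq_cons {v : V} (hv : v ≠ r) :
    ∃ h : G.Adj v (hG.parent r v), hG.pathTo r v = .cons h (hG.pathTo r (hG.parent r v)) := by
  obtain ⟨w, h, q, hq⟩ := (hG.pathTo r v).exists_eq_cons_of_ne hv
  have hqw : q = hG.pathTo r w := by
    have hpath := hG.isPath_pathTo r v
    rw [hq] at hpath
    exact hG.eq_pathTo r hpath.of_cons
  have hw : hG.parent r v = w := by simp [parent, hq]
  subst hw hqw
  exact ⟨h, hq⟩

lemma adj_parent {v : V} (hv : v ≠ r) : G.Adj v (hG.parent r v) :=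
  (hG.exists_pathTo_eq_cons r hv).1

lemma depth_eq_depth_parent_add_one {v : V} (hv : v ≠ r) :
    hG.depth r v = hG.depth r (hG.parent r v) + 1 := by
  obtain ⟨h, hcons⟩ := hG.exists_pathTo_eq_cons r hv
  rw [depth, hcons, length_cons, depth]

lemma parent_eq_of_adj_of_notMem_support {u v : V} (h : G.Adj u v)
    (hu : u ∉ (hG.pathTo r v).support) : hG.parent r u = v := by
  rw [parent, ← hG.eq_pathTo r ((cons_isPath_iff h _).2 ⟨hG.isPath_pathTo r v, hu⟩)]
  simp

lemma depth_lt_of_mem_support {u v : V} (hu : u ∈ (hG.pathTo r v).support) (huv : u ≠ v) :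
    hG.depth r u < hG.depth r v := by
  rw [depth, ← hG.eq_pathTo r ((hG.isPath_pathTo r v).dropUntil hu)]
  exact length_dropUntil_lt_length hu huv

-- Otherwise each endpoint lies on the other's path to `r`, so each would be deeper than the other.
lemma parent_eq_or_parent_eq_of_adj {u v : V} (h : G.Adj u v) :
    hG.parent r u = v ∨ hG.parent r v = u := by
  by_contra! ⟨hu, hv⟩
  have huv := hG.depth_lt_of_mem_support r
    (not_not.1 (mt (hG.parent_eq_of_adj_of_notMem_support r h) hu)) h.ne
  have hvu := hG.depth_lt_of_mem_support r
    (not_not.1 (mt (hG.parent_eq_of_adj_of_notMem_support r h.symm) hv)) h.ne'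
  omega

lemma adj_iff {u v : V} :
    G.Adj u v ↔ (u ≠ r ∧ hG.parent r u = v) ∨ (v ≠ r ∧ hG.parent r v = u) := by
  refine ⟨fun h => ?_, ?_⟩
  · rcases hG.parent_eq_or_parent_eq_of_adj r h with rfl | rfl
    · exact .inl ⟨fun hu => h.ne (by rw [hu, hG.parent_root]), rfl⟩
    · exact .inr ⟨fun hv => h.ne' (by rw [hv, hG.parent_root]), rfl⟩
  · rintro (⟨hu, rfl⟩ | ⟨hv, rfl⟩)
    · exact hG.adj_parent r hu
    · exact (hG.adj_parent r hv).symm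

lemma not_parent_eq_and_parent_eq {u v : V} (hu : u ≠ r) (hv : v ≠ r) :
    ¬(hG.parent r u = v ∧ hG.parent r v = u) := by
  rintro ⟨rfl, hvu⟩
  have h1 := hG.depth_eq_depth_parent_add_one r hu
  have h2 := hG.depth_eq_depth_parent_add_one r hv
  rw [hvu] at h2
  omega

theorem parent_induction {P : V → Prop} (root : P r)
    (step : ∀ v, v ≠ r → P (hG.parent r v) → P v) (v : V) : P v := by
  suffices ∀ n v, hG.depth r v = n → P v from this _ v rfl
  intro n
  induction n with
  | zero => intro v hv; rwa [(hG.depth_eq_zero_iff r).1 hv]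
  | succ n ih =>
    intro v hv
    by_cases hvr : v = r
    · rwa [hvr]
    · exact step v hvr (ih _ (by have := hG.depth_eq_depth_parent_add_one r hvr; omega))

theorem sum_sum_neighborFinset [Fintype V] {M : Type*} [AddCommMonoid M] (f : V → V → M) :
    ∑ u, ∑ v ∈ G.neighborFinset u, f u v
      = ∑ v ∈ univ.erase r, (f v (hG.parent r v) + f (hG.parent r v) v) := by
  calc ∑ u, ∑ v ∈ G.neighborFinset u, f u v
      = ∑ u, ∑ v, ((if u ≠ r ∧ hG.parent r u = v then f u v else 0)
          + if v ≠ r ∧ hG.parent r v = u then f u v else 0) := by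
        refine sum_congr rfl fun u _ => ?_
        rw [neighborFinset_eq_filter, sum_filter]
        refine sum_congr rfl fun v _ => ?_
        rw [hG.adj_iff r]
        by_cases hu : u ≠ r ∧ hG.parent r u = v <;> by_cases hv : v ≠ r ∧ hG.parent r v = u
        · exact absurd ⟨hu.2, hv.2⟩ (hG.not_parent_eq_and_parent_eq r hu.1 hv.1)
        all_goals simp [hu, hv]
    _ = _ := by
        simp only [sum_add_distrib]
        rw [sum_comm (f := fun u v => if v ≠ r ∧ hG.parent r v = u then f u v else 0)]
        simp [ite_and, sum_ite, filter_ne']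

end SimpleGraph.IsTree

lemma isHermitian_deformedLap {V : Type*} [Fintype V] (G : SimpleGraph V) (s : ℝ) :
    (deformedLap G s).IsHermitian := by
  simp [Matrix.IsHermitian, deformedLap, Matrix.conjTranspose_eq_transpose_of_trivial,
    Matrix.transpose_sub, Matrix.transpose_add, Matrix.transpose_smul]

lemma dotProduct_deformedLap_mulVec {V : Type*} [Fintype V] (G : SimpleGraph V) (s : ℝ)
    (x : V → ℝ) :
    x ⬝ᵥ (deformedLap G s *ᵥ x)
      = (1 - s ^ 2) * ∑ v, x v ^ 2
        + ∑ u, ∑ v ∈ G.neighborFinset u, (s ^ 2 * x u ^ 2 - s * x u * x v) := by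
  have hrow (u : V) : (deformedLap G s *ᵥ x) u
      = x u - s * ∑ v ∈ G.neighborFinset u, x v + s ^ 2 * (G.degree u * x u - x u) := by
    simp [deformedLap, Matrix.add_mulVec, Matrix.sub_mulVec, Matrix.smul_mulVec,
      Matrix.mulVec_diagonal, SimpleGraph.adjMatrix_mulVec_apply]
  have hnbr (u : V) : ∑ v ∈ G.neighborFinset u, (s ^ 2 * x u ^ 2 - s * x u * x v)
      = G.degree u * (s ^ 2 * x u ^ 2) - s * x u * ∑ v ∈ G.neighborFinset u, x v := by
    rw [sum_sub_distrib, sum_const, G.card_neighborFinset_eq_degree, nsmul_eq_mul, mul_sum]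
  simp only [dotProduct, hrow, hnbr]
  rw [mul_sum, ← sum_add_distrib]
  exact sum_congr rfl fun u _ => by ring

namespace SimpleGraph.IsTree

variable {V : Type*} [Fintype V] {G : SimpleGraph V}

theorem dotProduct_deformedLap_mulVec (hG : G.IsTree) (r : V) (s : ℝ) (x : V → ℝ) :
    x ⬝ᵥ (deformedLap G s *ᵥ x)
      = (1 - s ^ 2) * x r ^ 2 + ∑ v ∈ univ.erase r, (x v - s * x (hG.parent r v)) ^ 2 := by
  rw [_root_.dotProduct_deformedLap_mulVec, hG.sum_sum_neighborFinset r,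
    ← add_sum_erase _ _ (mem_univ r), mul_add, mul_sum, add_assoc, ← sum_add_distrib]
  congr 1
  exact sum_congr rfl fun v _ => by ring

theorem deformedLap_posDef (hG : G.IsTree) {s : ℝ} (hs : |s| < 1) :
    (deformedLap G s).PosDef := by
  obtain ⟨r⟩ := hG.connected.nonempty
  have hs2 : 0 < 1 - s ^ 2 := by rw [sub_pos, sq_lt_one_iff_abs_lt_one]; exact hs
  refine .of_dotProduct_mulVec_pos (isHermitian_deformedLap G s) fun x hx => ?_
  rw [star_trivial, hG.dotProduct_deformedLap_mulVec r]
  by_contra! hle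
  have hsq (v : V) (_ : v ∈ univ.erase r) : 0 ≤ (x v - s * x (hG.parent r v)) ^ 2 := sq_nonneg _
  obtain ⟨hroot, hsum⟩ := (add_eq_zero_iff_of_nonneg (by positivity) (sum_nonneg hsq)).1
    (le_antisymm hle (by positivity))
  replace hroot : x r = 0 := by simpa [hs2.ne'] using hroot
  have hstep (v : V) (hv : v ≠ r) : x v = s * x (hG.parent r v) := by
    have := (sum_eq_zero_iff_of_nonneg hsq).1 hsum v (mem_erase.2 ⟨hv, mem_univ v⟩)
    rw [sq_eq_zero_iff, sub_eq_zero] at this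
    exact this
  exact hx <| funext <| hG.parent_induction r (P := fun v => x v = 0) hroot
    fun v hv hpar => by rw [hstep v hv, hpar, mul_zero]

theorem abs_lt_one_of_deformedLap_posDef (hG : G.IsTree) {s : ℝ}
    (hpos : (deformedLap G s).PosDef) : |s| < 1 := by
  obtain ⟨r⟩ := hG.connected.nonempty
  set y : V → ℝ := fun v => s ^ hG.depth r v
  have hy_root : y r = 1 := by simp [y, (hG.depth_eq_zero_iff r).2 rfl]
  have hy_step (v : V) (hv : v ≠ r) : y v = s * y (hG.parent r v) := by
    simp only [y, hG.depth_eq_depth_parent_add_one r hv, pow_succ']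
  have hform := hpos.dotProduct_mulVec_pos (x := y) fun h => by
    simp [h] at hy_root
  rw [star_trivial, hG.dotProduct_deformedLap_mulVec r,
    sum_eq_zero fun v hv => by rw [hy_step v (mem_erase.1 hv).1, sub_self, zero_pow two_ne_zero],
    hy_root] at hform
  rw [← sq_lt_one_iff_abs_lt_one]
  linarith

end SimpleGraph.IsTree

theorem stmt_7_general {V : Type*} [Fintype V] (T : SimpleGraph V) (hT : T.IsTree)
    (s : ℝ) :
    (deformedLap T s).PosDef ↔ |s| < 1 :=
  ⟨hT.abs_lt_one_of_deformedLap_posDef, hT.deformedLap_posDef⟩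

/-- For a tree `T` on at least two vertices, `M_T(s)` is positive definite iff `|s| < 1`. -/
theorem stmt_7 {V : Type*} [Fintype V] (T : SimpleGraph V) (hT : T.IsTree)
    (hn : 2 ≤ Fintype.card V) (s : ℝ) :
    (deformedLap T s).PosDef ↔ |s| < 1 :=
  stmt_7_general T hT s
end

section
/- Let n ≥ 1 and let K_{1,n} be the star graph consisting of one central vertex adjacent to n leaves (on n + 1 vertices). For every real s, the characteristic polynomial of the deformed Laplacian M_{K_{1,n}}(s) factors as charpoly(M_{K_{1,n}}(s)) = (X - 1)^{n-1} · ( X^2 - (s^2·(n - 1) + 2)·X + (1 - s^2) ). Consequently the spectrum of M_{K_{1,n}}(s) consists of the eigenvalue 1 with multiplicity n - 1 together with the two numbers (1/2)·( s^2·(n-1) + 2 ± √( s^2·( s^2·(n-1)^2 + 4n ) ) ). -/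
open scoped Classical
open Matrix Polynomial

/-- The star `K_{1,n}`: vertex `0` of `Fin (n+1)` is adjacent to the `n` other
vertices, and there are no further edges. -/
def starGraph (n : ℕ) : SimpleGraph (Fin (n + 1)) where
  Adj i j := i ≠ j ∧ (i = 0 ∨ j = 0)
  symm := ⟨fun i j h => ⟨h.1.symm, h.2.symm⟩⟩
  loopless := ⟨fun i h => h.1 rfl⟩

/-!
Put the centre of the star first. Then the characteristic matrix `X·I - M(s)` is an arrowhead
matrix `[[a, b ⋯ b], [b, d·I]]` with `a = X - 1 - s²(n-1)`, `b = s` and `d = X - 1`. Multiplying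
it on the left by `[[d, -b ⋯ -b], [0, I]]` (determinant `d`) clears the top row, leaving a block
triangular matrix of determinant `(a d - n b²) dⁿ`; cancelling `d` in the domain `ℝ[X]` gives
`dⁿ⁻¹ (a d - n b²)`. The quadratic factor `a d - n b²` has discriminant `s²(s²(n-1)² + 4n) ≥ 0`.
-/

namespace Matrix

variable {R ι : Type*} [CommRing R] [Fintype ι] [DecidableEq ι]

def arrowhead (a d : R) (u v : ι → R) : Matrix (Fin 1 ⊕ ι) (Fin 1 ⊕ ι) R :=
  fromBlocks (of fun _ _ => a) (replicateRow (Fin 1) u) (replicateCol (Fin 1) v) (d • 1)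

theorem mul_det_arrowhead (a d : R) (u v : ι → R) :
    d * (arrowhead a d u v).det = d ^ Fintype.card ι * (a * d - u ⬝ᵥ v) := by
  let L : Matrix (Fin 1 ⊕ ι) (Fin 1 ⊕ ι) R :=
    fromBlocks (of fun _ _ => d) (-replicateRow (Fin 1) u) 0 1
  have hL : L.det = d := by simp [L]
  have hLM : L * arrowhead a d u v =
      fromBlocks (of fun _ _ => a * d - u ⬝ᵥ v) 0 (replicateCol (Fin 1) v) (d • 1) := by
    simp only [L, arrowhead, fromBlocks_multiply]
    congr 1 <;> ext <;> simp [mul_apply, dotProduct, mul_comm, sub_eq_add_neg]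
  calc d * (arrowhead a d u v).det = (L * arrowhead a d u v).det := by rw [det_mul, hL]
    _ = _ := by rw [hLM, det_fromBlocks_zero₁₂, det_unique, det_smul, det_one, of_apply]; ring

theorem det_arrowhead [IsDomain R] [Nonempty ι] {d : R} (hd : d ≠ 0) (a : R) (u v : ι → R) :
    (arrowhead a d u v).det = d ^ (Fintype.card ι - 1) * (a * d - u ⬝ᵥ v) :=
  mul_left_cancel₀ hd <| by
    rw [mul_det_arrowhead, ← mul_assoc, ← pow_succ', Nat.sub_add_cancel Fintype.card_pos]

end Matrix

theorem deformedLap_apply {V : Type*} [Fintype V] (G : SimpleGraph V) (s : ℝ) (i j : V) :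
    deformedLap G s i j =
      if i = j then 1 + s ^ 2 * ((G.degree i : ℝ) - 1) else if G.Adj i j then -s else 0 := by
  by_cases hij : i = j
  · subst hij
    simp [deformedLap]
  · by_cases hadj : G.Adj i j <;> simp [deformedLap, hij, hadj]

def finOneSumEquiv (n : ℕ) : Fin 1 ⊕ Fin n ≃ Fin (n + 1) :=
  finSumFinEquiv.trans (finCongr (Nat.add_comm 1 n))

@[simp]
theorem finOneSumEquiv_inl (n : ℕ) (i : Fin 1) : finOneSumEquiv n (.inl i) = 0 := by
  rw [Subsingleton.elim i 0]; rfl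

@[simp]
theorem finOneSumEquiv_inr (n : ℕ) (i : Fin n) : finOneSumEquiv n (.inr i) = i.succ := by
  ext; simp [finOneSumEquiv]

@[simp]
theorem starGraph_adj_zero (n : ℕ) (i : Fin n) : (starGraph n).Adj 0 i.succ :=
  ⟨(Fin.succ_ne_zero i).symm, .inl rfl⟩

@[simp]
theorem starGraph_adj_succ_succ (n : ℕ) (i j : Fin n) : ¬ (starGraph n).Adj i.succ j.succ :=
  fun h => h.2.elim (Fin.succ_ne_zero i) (Fin.succ_ne_zero j)

theorem starGraph_degree_zero (n : ℕ) : (starGraph n).degree 0 = n := by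
  have : (starGraph n).neighborFinset 0 = Finset.univ.erase 0 := by
    ext j; rw [SimpleGraph.mem_neighborFinset]; simp [starGraph, eq_comm]
  simp [← SimpleGraph.card_neighborFinset_eq_degree, this]

theorem starGraph_degree_succ (n : ℕ) (i : Fin n) : (starGraph n).degree i.succ = 1 := by
  have : (starGraph n).neighborFinset i.succ = {0} := by
    ext j; rw [SimpleGraph.mem_neighborFinset]; simp [starGraph]
    exact fun h => h ▸ Fin.succ_ne_zero i
  simp [← SimpleGraph.card_neighborFinset_eq_degree, this]

theorem charmatrix_deformedLap_starGraph_submatrix (n : ℕ) (s : ℝ) :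
    (charmatrix (deformedLap (starGraph n) s)).submatrix (finOneSumEquiv n) (finOneSumEquiv n) =
      arrowhead (X - C (1 + s ^ 2 * ((n : ℝ) - 1))) (X - 1) (fun _ => C s) (fun _ => C s) := by
  ext (i | i) (j | j) : 1
  · simp [charmatrix_apply_eq, deformedLap_apply, arrowhead, starGraph_degree_zero]
  · simp [charmatrix_apply_ne, deformedLap_apply, arrowhead, (Fin.succ_ne_zero j).symm]
  · simp [charmatrix_apply_ne, deformedLap_apply, arrowhead, (starGraph n).adj_comm _ 0]
  · by_cases hij : i = j
    · subst hij
      simp [charmatrix_apply_eq, deformedLap_apply, arrowhead, starGraph_degree_succ]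
    · simp [charmatrix_apply_ne, deformedLap_apply, arrowhead, hij]

theorem charpoly_deformedLap_starGraph {n : ℕ} (hn : 1 ≤ n) (s : ℝ) :
    (deformedLap (starGraph n) s).charpoly =
      (X - 1) ^ (n - 1) * (X ^ 2 - C (s ^ 2 * ((n : ℝ) - 1) + 2) * X + C (1 - s ^ 2)) := by
  have : Nonempty (Fin n) := ⟨⟨0, hn⟩⟩
  have hX : (X - 1 : ℝ[X]) ≠ 0 := by simpa using X_sub_C_ne_zero (1 : ℝ)
  rw [charpoly, ← det_submatrix_equiv_self (finOneSumEquiv n),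
    charmatrix_deformedLap_starGraph_submatrix, det_arrowhead hX, Fintype.card_fin]
  congr 1
  simp only [dotProduct, Finset.sum_const, Finset.card_univ, Fintype.card_fin, nsmul_eq_mul,
    map_add, map_sub, map_mul, map_pow, map_one, map_natCast, map_ofNat]
  ring

theorem X_sq_sub_C_add_mul_X_add_C_mul {R : Type*} [CommRing R] (a b : R) :
    X ^ 2 - C (a + b) * X + C (a * b) = (X - C a) * (X - C b) := by
  simp only [C_add, C_mul]
  ring

theorem X_sq_sub_C_mul_X_add_C_eq_mul {p q δ : ℝ} (hδ : 0 ≤ δ) (hdisc : p ^ 2 - 4 * q = δ) :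
    X ^ 2 - C p * X + C q = (X - C (1 / 2 * (p + √δ))) * (X - C (1 / 2 * (p - √δ))) := by
  have hsum : 1 / 2 * (p + √δ) + 1 / 2 * (p - √δ) = p := by ring
  have hprod : 1 / 2 * (p + √δ) * (1 / 2 * (p - √δ)) = q := by
    nlinarith [Real.sq_sqrt hδ]
  rw [← X_sq_sub_C_add_mul_X_add_C_mul, hsum, hprod]

/-- Characteristic polynomial of the deformed Laplacian of the star `K_{1,n}`:
it factors as `(X-1)^{n-1}·(X² - (s²(n-1)+2)X + (1-s²))`, so the spectrum is `1`
with multiplicity `n-1` together with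
`(1/2)(s²(n-1)+2 ± √(s²(s²(n-1)²+4n)))`. -/
theorem stmt_13 (n : ℕ) (hn : 1 ≤ n) (s : ℝ) :
    (deformedLap (starGraph n) s).charpoly
        = (X - 1) ^ (n - 1)
          * (X ^ 2 - C (s ^ 2 * ((n : ℝ) - 1) + 2) * X + C (1 - s ^ 2))
    ∧ (deformedLap (starGraph n) s).charpoly
        = (X - 1) ^ (n - 1)
          * (X - C ((1 / 2) * (s ^ 2 * ((n : ℝ) - 1) + 2
              + Real.sqrt (s ^ 2 * (s ^ 2 * ((n : ℝ) - 1) ^ 2 + 4 * (n : ℝ))))))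
          * (X - C ((1 / 2) * (s ^ 2 * ((n : ℝ) - 1) + 2
              - Real.sqrt (s ^ 2 * (s ^ 2 * ((n : ℝ) - 1) ^ 2 + 4 * (n : ℝ)))))) := by
  have hcharpoly := charpoly_deformedLap_starGraph hn s
  refine ⟨hcharpoly, ?_⟩
  rw [hcharpoly, mul_assoc]
  exact congrArg _ (X_sq_sub_C_mul_X_add_C_eq_mul (by positivity) (by ring))
end
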